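/- Let (S,C,R) be a binary double-full reaction network such that for each double complex 2S_i there is a directed path in the reaction graph from 2S_i to a complex y with ‖y‖₁ ≤ 1. Then along any D-type tier sequence {x_n} there exists a reaction y → y' ∈ R with y in tier 1 and lim_n (x_n∨1)^{y'}/(x_n∨1)^y = 0 (i.e., y strictly dominates y'). -/

import Mathlib

open Filter Topology Finset Real
open scoped ENNReal

/-- The monomial `(x ∨ 1)^y = ∏_i max(x_i,1)^{y_i}` for `x, y ∈ Z_{≥0}^d`. -/
noncomputable def monN {d : ℕ} (x : Fin d → ℕ) (y : Fin d → ℕ) : ℝ :=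
  ∏ i, ((max (x i) 1 : ℕ) : ℝ) ^ (y i)

/-- `y` belongs to tier 1 along the sequence `x` relative to the complex set `C`. -/
def Tier1 {d : ℕ} (C : Finset (Fin d → ℕ)) (x : ℕ → Fin d → ℕ) (y : Fin d → ℕ) : Prop :=
  ∀ y' ∈ C, ∃ L : ℝ≥0∞, 0 < L ∧
    Tendsto (fun n => ENNReal.ofReal (monN (x n) y / monN (x n) y')) atTop (𝓝 L)

/-!
Among the double complexes `2eᵢ` choose one whose monomial is not `o` of any other (a strict
order on a finite set has a maximal element); since the ratios converge, it dominates all of them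
up to `O`. Every binary monomial is at most `G² ≤ ∑ⱼ (x∨1)^{2eⱼ}`, where `G = maxⱼ (xⱼ∨1)`, so this
`2eᵢ` is in tier 1. Along the path from `2eᵢ`, tier 1 propagates through every reaction whose
ratio does not tend to `0`, by transitivity of `O`. A complex of norm `≤ 1` has monomial at most
`G = o(G²)` and so cannot be in tier 1: some reaction of the path descends.
-/

open Asymptotics

section Ratio

variable {α : Type*} {l : Filter α} {f g : α → ℝ}

theorem isLittleO_of_tendsto_ofReal_div_zero (hf : ∀ a, 0 ≤ f a) (hg : ∀ a, 0 < g a)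
    (h : Tendsto (fun a => ENNReal.ofReal (f a / g a)) l (𝓝 0)) : f =o[l] g := by
  have := (ENNReal.tendsto_toReal ENNReal.zero_ne_top).comp h
  refine (isLittleO_iff_tendsto fun a ha => absurd ha (hg a).ne').mpr ?_
  simpa [Function.comp_def, ENNReal.toReal_ofReal (div_nonneg (hf _) (hg _).le)] using this

theorem isBigO_of_tendsto_ofReal_div {L : ℝ≥0∞} (hL : L ≠ 0)
    (h : Tendsto (fun a => ENNReal.ofReal (f a / g a)) l (𝓝 L)) : g =O[l] f := by
  obtain ⟨c, hc0, hcL⟩ := exists_between (pos_iff_ne_zero.mpr hL)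
  have hc : 0 < c.toReal := ENNReal.toReal_pos hc0.ne' hcL.ne_top
  refine IsBigO.of_bound c.toReal⁻¹ ?_
  filter_upwards [h.eventually (eventually_gt_nhds hcL)] with a ha
  have hlt : c.toReal < f a / g a := (ENNReal.lt_ofReal_iff_toReal_lt hcL.ne_top).mp ha
  have hg : 0 < |g a| := by
    rcases eq_or_ne (g a) 0 with h0 | h0
    · simp [h0] at hlt; linarith
    · exact abs_pos.mpr h0
  rw [Real.norm_eq_abs, Real.norm_eq_abs, le_inv_mul_iff₀ hc]
  calc c.toReal * |g a| ≤ |f a / g a| * |g a| := by gcongr; exact hlt.le.trans (le_abs_self _)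
    _ = |f a| := by rw [abs_div, div_mul_cancel₀ _ hg.ne']

theorem exists_forall_isBigO_of_tendsto_ofReal_div {ι : Type*} [Finite ι] [Nonempty ι] [l.NeBot]
    {f : ι → α → ℝ} (hf : ∀ i a, 0 < f i a)
    (hlim : ∀ i j, ∃ L : ℝ≥0∞, Tendsto (fun a => ENNReal.ofReal (f i a / f j a)) l (𝓝 L)) :
    ∃ i, ∀ j, f j =O[l] f i := by
  let r : ι → ι → Prop := fun i j => f j =o[l] f i
  have : IsTrans ι r := ⟨fun _ _ _ hab hbc => hbc.trans hab⟩
  have : Std.Irrefl r := ⟨fun i => isLittleO_irrefl (.of_forall fun a => (hf i a).ne')⟩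
  obtain ⟨i, -, hi⟩ :=
    (Finite.wellFounded_of_trans_of_irrefl r).has_min Set.univ Set.univ_nonempty
  refine ⟨i, fun j => ?_⟩
  obtain ⟨L, hL⟩ := hlim i j
  refine isBigO_of_tendsto_ofReal_div (fun hL0 => hi j trivial ?_) hL
  subst hL0
  exact isLittleO_of_tendsto_ofReal_div_zero (fun a => (hf i a).le) (hf j) hL

theorem isBigO_of_nonneg_of_le (hf : ∀ a, 0 ≤ f a) (hfg : ∀ a, f a ≤ g a) : f =O[l] g :=
  isBigO_of_le l fun a => by
    rw [Real.norm_of_nonneg (hf a), Real.norm_of_nonneg ((hf a).trans (hfg a))]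
    exact hfg a

end Ratio

section Monomial

variable {d : ℕ}

theorem one_le_monN (x y : Fin d → ℕ) : 1 ≤ monN x y :=
  Finset.one_le_prod fun i _ => one_le_pow₀ (by exact_mod_cast le_max_right (x i) 1)

theorem monN_pos (x y : Fin d → ℕ) : 0 < monN x y :=
  one_pos.trans_le (one_le_monN x y)

def doubleComplex (i : Fin d) : Fin d → ℕ := fun j => if j = i then 2 else 0

theorem monN_doubleComplex (x : Fin d → ℕ) (i : Fin d) :
    monN x (doubleComplex i) = ((max (x i) 1 : ℕ) : ℝ) ^ 2 := by
  simp [monN, doubleComplex]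

variable [Nonempty (Fin d)]

noncomputable def maxCoord (x : Fin d → ℕ) : ℝ :=
  univ.sup' univ_nonempty fun j => ((max (x j) 1 : ℕ) : ℝ)

theorem le_maxCoord (x : Fin d → ℕ) (j : Fin d) : ((max (x j) 1 : ℕ) : ℝ) ≤ maxCoord x :=
  le_sup' (fun j => ((max (x j) 1 : ℕ) : ℝ)) (mem_univ j)

theorem one_le_maxCoord (x : Fin d → ℕ) : 1 ≤ maxCoord x :=
  le_trans (by exact_mod_cast le_max_right _ _) (le_maxCoord x (Classical.arbitrary _))

theorem monN_le_maxCoord_pow (x y : Fin d → ℕ) : monN x y ≤ maxCoord x ^ ∑ j, y j := by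
  rw [monN, ← prod_pow_eq_pow_sum]
  gcongr with j
  exact le_maxCoord x j

theorem maxCoord_sq_le_sum_monN_doubleComplex (x : Fin d → ℕ) :
    maxCoord x ^ 2 ≤ ∑ j, monN x (doubleComplex j) := by
  obtain ⟨j, -, hj⟩ := exists_mem_eq_sup' univ_nonempty fun j => ((max (x j) 1 : ℕ) : ℝ)
  rw [maxCoord, hj, ← monN_doubleComplex]
  exact single_le_sum (fun j _ => (monN_pos x _).le) (mem_univ j)

theorem tendsto_maxCoord_atTop {x : ℕ → Fin d → ℕ} {j : Fin d}
    (h : Tendsto (fun n => x n j) atTop atTop) : Tendsto (fun n => maxCoord (x n)) atTop atTop :=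
  tendsto_atTop_mono (fun n => le_trans (Nat.mono_cast (le_max_left _ _)) (le_maxCoord (x n) j))
    (tendsto_natCast_atTop_atTop.comp h)

end Monomial

def RatiosConverge {d : ℕ} (C : Finset (Fin d → ℕ)) (x : ℕ → Fin d → ℕ) : Prop :=
  ∀ y ∈ C, ∀ y' ∈ C, ∃ L : ℝ≥0∞,
    Tendsto (fun n => ENNReal.ofReal (monN (x n) y / monN (x n) y')) atTop (𝓝 L)

section Tier

variable {d : ℕ} {C : Finset (Fin d → ℕ)} {x : ℕ → Fin d → ℕ} {y y' : Fin d → ℕ}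

theorem Tier1.isBigO (h : Tier1 C x y) (hy' : y' ∈ C) :
    (fun n => monN (x n) y') =O[atTop] fun n => monN (x n) y := by
  obtain ⟨L, hL, hlim⟩ := h y' hy'
  exact isBigO_of_tendsto_ofReal_div hL.ne' hlim

theorem tier1_of_isBigO (hR : RatiosConverge C x) (hy : y ∈ C)
    (h : ∀ y' ∈ C, (fun n => monN (x n) y') =O[atTop] fun n => monN (x n) y) : Tier1 C x y := by
  intro y' hy'
  obtain ⟨L, hL⟩ := hR y hy y' hy'
  refine ⟨L, pos_iff_ne_zero.mpr fun hL0 => ?_, hL⟩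
  subst hL0
  have hsmall := isLittleO_of_tendsto_ofReal_div_zero (fun n => (monN_pos _ _).le)
    (fun n => monN_pos _ _) hL
  exact isLittleO_irrefl (.of_forall fun n => (monN_pos (x n) y).ne')
    (hsmall.trans_isBigO (h y' hy'))

theorem Tier1.of_not_tendsto_div (hR : RatiosConverge C x) (hy : Tier1 C x y) (hyC : y ∈ C)
    (hy'C : y' ∈ C) (h : ¬ Tendsto (fun n => monN (x n) y' / monN (x n) y) atTop (𝓝 0)) :
    Tier1 C x y' := by
  obtain ⟨L, hL⟩ := hR y' hy'C y hyC
  have hL0 : L ≠ 0 := by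
    rintro rfl
    exact h (isLittleO_of_tendsto_ofReal_div_zero (fun n => (monN_pos _ _).le)
      (fun n => monN_pos _ _) hL).tendsto_div_nhds_zero
  exact tier1_of_isBigO hR hy'C fun z hz =>
    (hy.isBigO hz).trans (isBigO_of_tendsto_ofReal_div hL0 hL)

theorem Tier1.of_path {R : Finset ((Fin d → ℕ) × (Fin d → ℕ))}
    (hRC : ∀ r ∈ R, r.1 ∈ C ∧ r.2 ∈ C) (hR : RatiosConverge C x)
    (hno : ∀ y y', (y, y') ∈ R → Tier1 C x y →
      ¬ Tendsto (fun n => monN (x n) y' / monN (x n) y) atTop (𝓝 0))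
    {c : ℕ → Fin d → ℕ} {k : ℕ} (hc : ∀ m < k, (c m, c (m + 1)) ∈ R) (h0 : Tier1 C x (c 0)) :
    Tier1 C x (c k) := by
  induction k with
  | zero => exact h0
  | succ k ih =>
    have he := hc k k.lt_succ_self
    have hk := ih fun m hm => hc m (hm.trans k.lt_succ_self)
    exact hk.of_not_tendsto_div hR (hRC _ he).1 (hRC _ he).2 (hno _ _ he hk)

variable [Nonempty (Fin d)]

theorem tier1_doubleComplex (hR : RatiosConverge C x) (hbinary : ∀ y ∈ C, ∑ j, y j ≤ 2)
    (hfull : ∀ i, doubleComplex i ∈ C) {i : Fin d}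
    (hi : ∀ j, (fun n => monN (x n) (doubleComplex j)) =O[atTop]
      fun n => monN (x n) (doubleComplex i)) :
    Tier1 C x (doubleComplex i) := by
  refine tier1_of_isBigO hR (hfull i) fun y hy => ?_
  have hle : ∀ n, monN (x n) y ≤ ∑ j, monN (x n) (doubleComplex j) := fun n => calc
    monN (x n) y ≤ maxCoord (x n) ^ ∑ j, y j := monN_le_maxCoord_pow _ _
    _ ≤ maxCoord (x n) ^ 2 := pow_le_pow_right₀ (one_le_maxCoord _) (hbinary y hy)
    _ ≤ _ := maxCoord_sq_le_sum_monN_doubleComplex _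
  exact (isBigO_of_nonneg_of_le (fun n => (monN_pos _ _).le) hle).trans
    (IsBigO.fun_sum fun j _ => hi j)

theorem not_tier1_of_sum_le_one (hfull : ∀ i, doubleComplex i ∈ C)
    (hx : Tendsto (fun n => maxCoord (x n)) atTop atTop) (hy : ∑ j, y j ≤ 1) :
    ¬ Tier1 C x y := by
  intro h
  -- `G² ≲ ∑ⱼ (x∨1)^{2eⱼ} ≲ (x∨1)^y ≤ G`, while `G → ∞`.
  have hsq : (fun n => maxCoord (x n) ^ 2) =O[atTop]
      fun n => ∑ j, monN (x n) (doubleComplex j) :=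
    isBigO_of_nonneg_of_le (fun n => by positivity) fun n =>
      maxCoord_sq_le_sum_monN_doubleComplex _
  have hsum : (fun n => ∑ j, monN (x n) (doubleComplex j)) =O[atTop] fun n => monN (x n) y :=
    IsBigO.fun_sum fun j _ => h.isBigO (hfull j)
  have hmon : (fun n => monN (x n) y) =O[atTop] fun n => maxCoord (x n) :=
    isBigO_of_nonneg_of_le (fun n => (monN_pos _ _).le) fun n =>
      (monN_le_maxCoord_pow _ _).trans <|
        (pow_le_pow_right₀ (one_le_maxCoord _) hy).trans_eq (pow_one _)
  have hsmall : (fun n => maxCoord (x n)) =o[atTop] fun n => maxCoord (x n) ^ 2 := by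
    simpa [Function.comp_def] using (isLittleO_pow_pow_atTop_of_lt one_lt_two).comp_tendsto hx
  exact isLittleO_irrefl (.of_forall fun n => (one_pos.trans_le (one_le_maxCoord (x n))).ne')
    (hsmall.trans_isBigO (hsq.trans (hsum.trans hmon)))

end Tier

theorem exists_descending_reaction_general (d : ℕ) (C : Finset (Fin d → ℕ))
    (R : Finset ((Fin d → ℕ) × (Fin d → ℕ)))
    (hRC : ∀ r ∈ R, r.1 ∈ C ∧ r.2 ∈ C)
    (hbinary : ∀ y ∈ C, ∑ j, y j ≤ 2)
    (hfull : ∀ i : Fin d, (fun j => if j = i then 2 else 0 : Fin d → ℕ) ∈ C)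
    (hpath : ∀ i : Fin d, ∃ (k : ℕ) (c : ℕ → (Fin d → ℕ)),
      c 0 = (fun j => if j = i then 2 else 0) ∧ (∑ j, c k j ≤ 1) ∧
        ∀ m < k, (c m, c (m + 1)) ∈ R)
    (x : ℕ → Fin d → ℕ)
    (hinf : ∃ j, Tendsto (fun n => x n j) atTop atTop)
    (hRatio : ∀ y ∈ C, ∀ y' ∈ C, ∃ L : ℝ≥0∞,
      Tendsto (fun n => ENNReal.ofReal (monN (x n) y / monN (x n) y')) atTop (𝓝 L)) :
    ∃ y y' : Fin d → ℕ, (y, y') ∈ R ∧ Tier1 C x y ∧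
      Tendsto (fun n => monN (x n) y' / monN (x n) y) atTop (𝓝 0) := by
  obtain ⟨j, hj⟩ := hinf
  have : Nonempty (Fin d) := ⟨j⟩
  obtain ⟨i, hi⟩ := exists_forall_isBigO_of_tendsto_ofReal_div
    (f := fun i n => monN (x n) (doubleComplex i)) (fun _ _ => monN_pos _ _)
    fun a b => hRatio _ (hfull a) _ (hfull b)
  obtain ⟨k, c, hc0, hck, hcR⟩ := hpath i
  by_contra! hno
  have htop : Tier1 C x (c 0) := hc0 ▸ tier1_doubleComplex hRatio hbinary hfull hi
  exact not_tier1_of_sum_le_one hfull (tendsto_maxCoord_atTop hj) hck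
    (htop.of_path hRC hRatio hno hcR)

/-- part (iii) of Lemma 8 of the paper: for a binary double-full network
in which each double complex `2S_i` has a directed path in the reaction graph to a
complex of ℓ¹-norm at most 1, along any D-type tier sequence there is a reaction
`y → y'` with `y` in tier 1 strictly dominating `y'`. -/
theorem exists_descending_reaction (d : ℕ) (hd : 1 ≤ d) (C : Finset (Fin d → ℕ))
    (R : Finset ((Fin d → ℕ) × (Fin d → ℕ)))
    (hRC : ∀ r ∈ R, r.1 ∈ C ∧ r.2 ∈ C)
    (hbinary : ∀ y ∈ C, ∑ j, y j ≤ 2)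
    (hfull : ∀ i : Fin d, (fun j => if j = i then 2 else 0 : Fin d → ℕ) ∈ C)
    (hpath : ∀ i : Fin d, ∃ (k : ℕ) (c : ℕ → (Fin d → ℕ)),
      c 0 = (fun j => if j = i then 2 else 0) ∧ (∑ j, c k j ≤ 1) ∧
        ∀ m < k, (c m, c (m + 1)) ∈ R)
    (x : ℕ → Fin d → ℕ)
    (hLim : ∀ j, ∃ L : ℝ≥0∞, Tendsto (fun n => ((x n j : ℕ) : ℝ≥0∞)) atTop (𝓝 L))
    (hinf : ∃ j, Tendsto (fun n => x n j) atTop atTop)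
    (hRatio : ∀ y ∈ C, ∀ y' ∈ C, ∃ L : ℝ≥0∞,
      Tendsto (fun n => ENNReal.ofReal (monN (x n) y / monN (x n) y')) atTop (𝓝 L)) :
    ∃ y y' : Fin d → ℕ, (y, y') ∈ R ∧ Tier1 C x y ∧
      Tendsto (fun n => monN (x n) y' / monN (x n) y) atTop (𝓝 0) :=
  exists_descending_reaction_general d C R hRC hbinary hfull hpath x hinf hRatio
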